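/- Let L ≥ 1 be an integer, let p and w be as in the explicit parallel-tempering construction and its permutation identification, and let n ≥ 1 be an integer. Then the sum of w(σ) over all permutations σ of {0,…,L} with exactly n non-fixed points (i.e., |{i : σ(i) ≠ i}| = n) is at most (L+1)^{−n}. -/

import Mathlib

/-- The unnormalized weight `N(i,k) = γ^(2(i+1)k − k² + 1) + Σ_{r=0}^{L} γ^((2r+1)(i+1) − r² − r)`
with `γ = (L+1)³`, of the explicit parallel-tempering construction. -/
noncomputable def NPT (L i k : ℕ) : ℝ :=
  (((L : ℝ) + 1) ^ 3) ^ (2 * ((i : ℤ) + 1) * (k : ℤ) - (k : ℤ) ^ 2 + 1) +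
    ∑ r ∈ Finset.range (L + 1),
      (((L : ℝ) + 1) ^ 3) ^ ((2 * (r : ℤ) + 1) * ((i : ℤ) + 1) - (r : ℤ) ^ 2 - (r : ℤ))

/-- `p(i,k) = N(i,k) / Σ_{h=1}^{m} N(i,h)` with `m = L+1`: the probability vector of the
explicit parallel-tempering construction. -/
noncomputable def pPT (L i k : ℕ) : ℝ := NPT L i k / ∑ h ∈ Finset.Icc 1 (L + 1), NPT L i h

/-- The weight `w(σ) = Π_{i=0}^{L} p(i, σ(i)+1)` of a permutation `σ` of `{0,…,L}`
(states of the projected chain are identified with permutations). -/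
noncomputable def wPT (L : ℕ) (σ : Equiv.Perm (Fin (L + 1))) : ℝ :=
  ∏ i : Fin (L + 1), pPT L (i : ℕ) ((σ i : ℕ) + 1)

/-
With `γ = (L+1)³`, the `k`-th leading term of `N(i,k)` is `γ` to the power
`(i+1)² + 1 - (k-i-1)²`, while every term of the `k`-independent sum has exponent at most
`(i+1)²`. So the diagonal `k = i+1` dominates the normalizer, and `p(i,k) ≤ (L+1)⁻²` whenever
`k ≠ i+1`.
A permutation moving `n` points therefore has weight at most `(L+1)^(-2n)`, and there are at most
`(L+1)^n` of them (a support of size `n`, then a permutation of it).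
-/

open Finset

namespace Equiv.Perm

theorem card_filter_card_support_eq_le {α : Type*} [Fintype α] [DecidableEq α]
    (n : ℕ) : #{σ : Perm α | #σ.support = n} ≤ (Fintype.card α).descFactorial n := by
  let extend : (Σ T : powersetCard n (univ : Finset α), Perm T.1) → Perm α :=
    fun τ => ofSubtype τ.2
  have hsurj : Set.SurjOn extend
      (univ : Finset (Σ T : powersetCard n (univ : Finset α), Perm T.1))
      ({σ : Perm α | #σ.support = n} : Finset _) := by
    intro σ hσ
    refine ⟨⟨⟨σ.support, mem_powersetCard.mpr ⟨subset_univ _, (mem_filter.mp hσ).2⟩⟩,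
      σ.subtypePermOfSupport⟩, mem_univ _, ?_⟩
    exact ofSubtype_subtypePerm (fun _ => apply_mem_support) fun _ => mem_support.mpr
  calc #{σ : Perm α | #σ.support = n}
      ≤ #(univ : Finset (Σ T : powersetCard n (univ : Finset α), Perm T.1)) :=
        card_le_card_of_surjOn extend hsurj
    _ = (Fintype.card α).descFactorial n := by
        rw [card_univ, Fintype.card_sigma]
        simp [Fintype.card_perm, (mem_powersetCard.mp (Subtype.prop _)).2,
          Nat.descFactorial_eq_factorial_mul_choose, mul_comm]

end Equiv.Perm

lemma Int.two_mul_mul_sub_sq_add_one_le_sq {a k : ℤ} (hk : k ≠ a) :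
    2 * a * k - k ^ 2 + 1 ≤ a ^ 2 := by
  have : 1 ≤ (k - a) ^ 2 := by
    nlinarith [Int.one_le_abs (sub_ne_zero.mpr hk), sq_abs (k - a)]
  nlinarith

lemma Int.two_mul_add_one_mul_sub_sq_sub_le_sq (a r : ℤ) :
    (2 * r + 1) * a - r ^ 2 - r ≤ a ^ 2 := by
  -- `a ^ 2` minus the left side is `(r - a) * (r - a + 1)`, a product of consecutive integers
  rcases le_or_gt r (a - 1) with h | h <;> nlinarith

noncomputable def sideSumPT (L i : ℕ) : ℝ :=
  ∑ r ∈ range (L + 1),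
    (((L : ℝ) + 1) ^ 3) ^ ((2 * (r : ℤ) + 1) * ((i : ℤ) + 1) - (r : ℤ) ^ 2 - (r : ℤ))

section
variable (L : ℕ)

lemma one_le_cube_cast_add_one : (1 : ℝ) ≤ ((L : ℝ) + 1) ^ 3 :=
  one_le_pow₀ (by linarith [L.cast_nonneg (α := ℝ)])

lemma NPT_eq (i k : ℕ) : NPT L i k =
    (((L : ℝ) + 1) ^ 3) ^ (2 * ((i : ℤ) + 1) * (k : ℤ) - (k : ℤ) ^ 2 + 1) + sideSumPT L i :=
  rfl

lemma NPT_pos (i k : ℕ) : 0 < NPT L i k := by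
  unfold NPT
  positivity

lemma sum_NPT_pos (i : ℕ) : 0 < ∑ h ∈ Icc 1 (L + 1), NPT L i h :=
  sum_pos (fun h _ => NPT_pos L i h) (nonempty_Icc.mpr (by omega))

lemma pPT_nonneg (i k : ℕ) : 0 ≤ pPT L i k :=
  div_nonneg (NPT_pos L i k).le (sum_NPT_pos L i).le

lemma pPT_le_one {i k : ℕ} (hk : k ∈ Icc 1 (L + 1)) : pPT L i k ≤ 1 := by
  rw [pPT, div_le_one (sum_NPT_pos L i)]
  exact single_le_sum (fun h _ => (NPT_pos L i h).le) hk

lemma sideSumPT_le (i : ℕ) :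
    sideSumPT L i ≤ ((L : ℝ) + 1) * (((L : ℝ) + 1) ^ 3) ^ (((i : ℤ) + 1) ^ 2) := by
  calc sideSumPT L i ≤ ∑ _r ∈ range (L + 1), (((L : ℝ) + 1) ^ 3) ^ (((i : ℤ) + 1) ^ 2) :=
        sum_le_sum fun _ _ => zpow_le_zpow_right₀ (one_le_cube_cast_add_one L)
          (Int.two_mul_add_one_mul_sub_sq_sub_le_sq _ _)
    _ = _ := by simp

lemma NPT_le_of_ne {i k : ℕ} (hne : k ≠ i + 1) :
    NPT L i k ≤ (((L : ℝ) + 1) ^ 3) ^ (((i : ℤ) + 1) ^ 2) + sideSumPT L i := by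
  rw [NPT_eq]
  gcongr
  · exact one_le_cube_cast_add_one L
  exact Int.two_mul_mul_sub_sq_add_one_le_sq (by omega)

lemma sum_NPT_ge {i : ℕ} (hi : i ≤ L) :
    (((L : ℝ) + 1) ^ 3) ^ (((i : ℤ) + 1) ^ 2 + 1) + ((L : ℝ) + 1) * sideSumPT L i ≤
      ∑ h ∈ Icc 1 (L + 1), NPT L i h := by
  simp only [NPT_eq, sum_add_distrib, sum_const, Nat.card_Icc, Nat.add_sub_cancel, nsmul_eq_mul,
    Nat.cast_add_one]
  gcongr
  have hdiag : (((L : ℝ) + 1) ^ 3) ^ (((i : ℤ) + 1) ^ 2 + 1) =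
      (((L : ℝ) + 1) ^ 3) ^
        (2 * ((i : ℤ) + 1) * ((i + 1 : ℕ) : ℤ) - ((i + 1 : ℕ) : ℤ) ^ 2 + 1) := by
    congr 1
    push_cast
    ring
  rw [hdiag]
  exact single_le_sum (f := fun h : ℕ =>
      (((L : ℝ) + 1) ^ 3) ^ (2 * ((i : ℤ) + 1) * (h : ℤ) - (h : ℤ) ^ 2 + 1))
    (fun h _ => by positivity) (mem_Icc.mpr ⟨by omega, by omega⟩)

lemma pPT_le_inv_sq {i k : ℕ} (hi : i ≤ L) (hne : k ≠ i + 1) :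
    pPT L i k ≤ (((L : ℝ) + 1) ^ 2)⁻¹ := by
  set m : ℝ := (L : ℝ) + 1
  set g : ℝ := (m ^ 3) ^ (((i : ℤ) + 1) ^ 2)
  have hm : 1 ≤ m := by simp [m]
  have hg : 0 < g := by positivity
  have hS : 0 ≤ sideSumPT L i := sum_nonneg fun _ _ => by positivity
  have hden : m ^ 3 * g + m * sideSumPT L i ≤ ∑ h ∈ Icc 1 (L + 1), NPT L i h := by
    have := sum_NPT_ge L hi
    rwa [zpow_add_one₀ (by positivity), mul_comm] at this
  rw [pPT, div_le_iff₀ (sum_NPT_pos L i), ← div_eq_inv_mul, le_div_iff₀ (by positivity)]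
  -- the gap `m (m - 1) (m g - S)` is nonnegative because `S ≤ m g`
  calc NPT L i k * m ^ 2 ≤ (g + sideSumPT L i) * m ^ 2 := by gcongr; exact NPT_le_of_ne L hne
    _ ≤ m ^ 3 * g + m * sideSumPT L i := by
        nlinarith [mul_le_mul_of_nonneg_left (sideSumPT_le L i) (by nlinarith : 0 ≤ m ^ 2 - m)]
    _ ≤ _ := hden

lemma wPT_le_pow_card_support (σ : Equiv.Perm (Fin (L + 1))) :
    wPT L σ ≤ (((L : ℝ) + 1) ^ 2)⁻¹ ^ #σ.support := by
  have hmoved :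
      ∏ i ∈ σ.support, pPT L i (σ i + 1) ≤ (((L : ℝ) + 1) ^ 2)⁻¹ ^ #σ.support :=
    (prod_le_prod (fun _ _ => pPT_nonneg L _ _) fun i hi =>
      pPT_le_inv_sq L (by omega) fun _ =>
        Equiv.Perm.mem_support.mp hi (Fin.ext (by omega))).trans_eq (prod_const _)
  have hfixed : ∏ i ∈ univ with ¬σ i ≠ i, pPT L i (σ i + 1) ≤ 1 :=
    prod_le_one (fun _ _ => pPT_nonneg L _ _) fun i _ =>
      pPT_le_one L (mem_Icc.mpr ⟨by omega, by omega⟩)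
  rw [wPT, ← prod_filter_mul_prod_filter_not univ (fun i => σ i ≠ i)]
  exact (mul_le_of_le_one_right (prod_nonneg fun _ _ => pPT_nonneg L _ _) hfixed).trans hmoved

end

theorem stmt_15_general (L : ℕ) (n : ℕ) :
    ∑ σ ∈ Finset.univ.filter
        (fun σ : Equiv.Perm (Fin (L + 1)) =>
          (Finset.univ.filter fun i => σ i ≠ i).card = n),
      wPT L σ ≤ ((L : ℝ) + 1) ^ (-(n : ℤ)) := by
  have hcard :
      (#{σ : Equiv.Perm (Fin (L + 1)) | #σ.support = n} : ℝ) ≤ ((L : ℝ) + 1) ^ n := by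
    exact_mod_cast (Equiv.Perm.card_filter_card_support_eq_le (α := Fin (L + 1)) n).trans
      (by simpa using Nat.descFactorial_le_pow (L + 1) n)
  calc _ ≤ #{σ : Equiv.Perm (Fin (L + 1)) | #σ.support = n} •
          (((L : ℝ) + 1) ^ 2)⁻¹ ^ n :=
        sum_le_card_nsmul _ _ _ fun σ hσ => (mem_filter.mp hσ).2 ▸ wPT_le_pow_card_support L σ
    _ ≤ ((L : ℝ) + 1) ^ n * (((L : ℝ) + 1) ^ 2)⁻¹ ^ n := by
        rw [nsmul_eq_mul]; gcongr
    _ = ((L : ℝ) + 1) ^ (-(n : ℤ)) := by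
        rw [zpow_neg, zpow_natCast, inv_pow, ← pow_mul, pow_mul']
        field_simp

/-- for `n ≥ 1`, the sum of `w(σ)` over permutations `σ` of `{0,…,L}` with
exactly `n` non-fixed points is at most `(L+1)^{−n}`. -/
theorem stmt_15 (L : ℕ) (hL : 1 ≤ L) (n : ℕ) (hn : 1 ≤ n) :
    ∑ σ ∈ Finset.univ.filter
        (fun σ : Equiv.Perm (Fin (L + 1)) =>
          (Finset.univ.filter fun i => σ i ≠ i).card = n),
      wPT L σ ≤ ((L : ℝ) + 1) ^ (-(n : ℤ)) :=
  stmt_15_general L n
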